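/- arXiv:math/0012113 — 3 statements merged into one kernel-verified Lean document; each statement's English description precedes it below -/
import Mathlib

section
/- Let f : Ω₀ → ℂ be continuously differentiable with compact support in Ω₀, and let F(ξ,η) = f(ξ, η/φ(ξ)) on Ω. Then ∫_Ω |∇F(ξ,η)|² dξ dη = ∫_{Ω₀} (A(x,y) ∇f(x,y)) · ∇\overline{f}(x,y) · φ(x) dx dy, where A(x,y) = [[1, −φ'(x)y/φ(x)], [−φ'(x)y/φ(x), (1+(φ'(x)y)²)/φ(x)²]]. -/
/-!
The map `ψ(x, y) = (x, y φ(x))` inverts `Φ` and carries `Ω₀` bijectively onto `Ω`, with Jacobian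
determinant `φ(x) > 0`. By the chain rule through `Φ`, the partial derivatives of `F` at `ψ(x, y)`
are `∂ₓf - (φ' y / φ) ∂_y f` and `φ⁻¹ ∂_y f`, evaluated at `(x, y)`; so the change of variables
formula turns the Dirichlet integral of `F` over `Ω` into an integral over `Ω₀` whose integrand,
after expanding `|u|² = ū u`, is `(A ∇f) · ∇f̄ · φ`.
-/

open Set MeasureTheory ContinuousLinearMap

lemma det_fst_prod_smul_fst_add_smul_snd (d e : ℝ) :
    ((fst ℝ ℝ ℝ).prod (d • fst ℝ ℝ ℝ + e • snd ℝ ℝ ℝ)).det = e := by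
  rw [ContinuousLinearMap.det, ← LinearMap.det_toMatrix (Module.Basis.finTwoProd ℝ),
    Matrix.det_fin_two]
  simp [LinearMap.toMatrix_apply]

section FiberMaps

variable {φ : ℝ → ℝ} {p : ℝ × ℝ}

lemma hasFDerivAt_fiber_mul (hφ : DifferentiableAt ℝ φ p.1) :
    HasFDerivAt (fun q : ℝ × ℝ => (q.1, q.2 * φ q.1))
      ((fst ℝ ℝ ℝ).prod ((p.2 * deriv φ p.1) • fst ℝ ℝ ℝ + φ p.1 • snd ℝ ℝ ℝ)) p := by
  refine hasFDerivAt_fst.prodMk ?_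
  have := hasFDerivAt_snd.mul (hφ.hasDerivAt.comp_hasFDerivAt p (hasFDerivAt_fst (𝕜 := ℝ) (p := p)))
  exact this.congr_fderiv (by rw [smul_smul]; rfl)

lemma hasFDerivAt_fiber_div (hφ : DifferentiableAt ℝ φ p.1) (h0 : φ p.1 ≠ 0) :
    HasFDerivAt (fun q : ℝ × ℝ => (q.1, q.2 / φ q.1))
      ((fst ℝ ℝ ℝ).prod
        ((p.2 * (-deriv φ p.1 / φ p.1 ^ 2)) • fst ℝ ℝ ℝ + (φ p.1)⁻¹ • snd ℝ ℝ ℝ)) p := by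
  refine hasFDerivAt_fst.prodMk ?_
  have := hasFDerivAt_snd.mul ((hφ.hasDerivAt.inv h0).comp_hasFDerivAt p (hasFDerivAt_fst (𝕜 := ℝ) (p := p)))
  exact this.congr_fderiv (by rw [smul_smul]; rfl)

lemma injOn_fiber_mul {s : Set (ℝ × ℝ)} (hφ : ∀ q ∈ s, φ q.1 ≠ 0) :
    InjOn (fun q : ℝ × ℝ => (q.1, q.2 * φ q.1)) s := by
  rintro ⟨x, y⟩ hp ⟨x', y'⟩ hq h
  obtain rfl : x = x' := congrArg Prod.fst h
  exact Prod.ext rfl (mul_right_cancel₀ (hφ _ hp) (congrArg Prod.snd h))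

lemma image_fiber_mul_Ioo_prod_Ioo {a b : ℝ} (hφ : ∀ x ∈ Ioo a b, 0 < φ x) :
    (fun q : ℝ × ℝ => (q.1, q.2 * φ q.1)) '' Ioo a b ×ˢ Ioo 0 1
      = {q : ℝ × ℝ | a < q.1 ∧ q.1 < b ∧ 0 < q.2 ∧ q.2 < φ q.1} := by
  ext ⟨x, η⟩
  simp only [mem_ofPred_eq, mem_image, Prod.mk.injEq, mem_prod, mem_Ioo, Prod.exists]
  constructor
  · rintro ⟨x, y, ⟨⟨h1, h2⟩, h3, h4⟩, rfl, rfl⟩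
    have hx := hφ x ⟨h1, h2⟩
    exact ⟨h1, h2, mul_pos h3 hx, by nlinarith⟩
  · rintro ⟨h1, h2, h3, h4⟩
    have hx := hφ x ⟨h1, h2⟩
    exact ⟨x, η / φ x, ⟨⟨h1, h2⟩, div_pos h3 hx, (div_lt_one hx).2 h4⟩, rfl, by field_simp⟩

end FiberMaps

section ChainRule

variable {E : Type*} [NormedAddCommGroup E] [NormedSpace ℝ E]
  {f : ℝ × ℝ → E} {φ : ℝ → ℝ} {x y : ℝ}

lemma fderiv_comp_fiber_div_eq (hf : DifferentiableAt ℝ f (x, y))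
    (hφ : DifferentiableAt ℝ φ x) (h0 : φ x ≠ 0) (v : ℝ × ℝ) :
    fderiv ℝ (fun q : ℝ × ℝ => f (q.1, q.2 / φ q.1)) (x, y * φ x) v
      = fderiv ℝ f (x, y) (v.1, y * φ x * (-deriv φ x / φ x ^ 2) * v.1 + (φ x)⁻¹ * v.2) := by
  have hback : (x, y * φ x / φ x) = (x, y) := by rw [mul_div_cancel_right₀ _ h0]
  have hf' : HasFDerivAt f (fderiv ℝ f (x, y)) (x, y * φ x / φ x) := hback ▸ hf.hasFDerivAt
  have hcomp : HasFDerivAt (fun q : ℝ × ℝ => f (q.1, q.2 / φ q.1)) _ (x, y * φ x) :=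
    hf'.comp (x, y * φ x) (hasFDerivAt_fiber_div (p := (x, y * φ x)) hφ h0)
  rw [hcomp.fderiv]
  simp

lemma fderiv_comp_fiber_div_apply_one_zero (hf : DifferentiableAt ℝ f (x, y))
    (hφ : DifferentiableAt ℝ φ x) (h0 : φ x ≠ 0) :
    fderiv ℝ (fun q : ℝ × ℝ => f (q.1, q.2 / φ q.1)) (x, y * φ x) (1, 0)
      = fderiv ℝ f (x, y) (1, 0) - (deriv φ x * y / φ x) • fderiv ℝ f (x, y) (0, 1) := by
  have hv : ((1 : ℝ), y * φ x * (-deriv φ x / φ x ^ 2) * 1 + (φ x)⁻¹ * 0)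
      = ((1 : ℝ), (0 : ℝ)) - (deriv φ x * y / φ x) • ((0 : ℝ), (1 : ℝ)) := by
    ext <;> simp only [Prod.fst_sub, Prod.snd_sub, Prod.smul_fst, Prod.smul_snd, smul_eq_mul]
    · ring
    · field_simp; ring
  rw [fderiv_comp_fiber_div_eq hf hφ h0, hv, map_sub, map_smul]

lemma fderiv_comp_fiber_div_apply_zero_one (hf : DifferentiableAt ℝ f (x, y))
    (hφ : DifferentiableAt ℝ φ x) (h0 : φ x ≠ 0) :
    fderiv ℝ (fun q : ℝ × ℝ => f (q.1, q.2 / φ q.1)) (x, y * φ x) (0, 1)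
      = (φ x)⁻¹ • fderiv ℝ f (x, y) (0, 1) := by
  have hv : ((0 : ℝ), y * φ x * (-deriv φ x / φ x ^ 2) * 0 + (φ x)⁻¹ * 1)
      = (φ x)⁻¹ • ((0 : ℝ), (1 : ℝ)) := by
    ext <;> simp
  rw [fderiv_comp_fiber_div_eq hf hφ h0, hv, map_smul]

end ChainRule

lemma real_smul_ofReal_sq_norm_sub_smul_add_sq_norm_inv_smul (A B : ℂ) (d y r : ℝ)
    (hr : r ≠ 0) :
    r • ((‖A - (d * y / r) • B‖ ^ 2 + ‖r⁻¹ • B‖ ^ 2 : ℝ) : ℂ)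
      = ((starRingEnd ℂ) A * A
          + ((-(d * y / r) : ℝ) : ℂ) * ((starRingEnd ℂ) A * B + (starRingEnd ℂ) B * A)
          + (((1 + (d * y) ^ 2) / r ^ 2 : ℝ) : ℂ) * ((starRingEnd ℂ) B * B)) * (r : ℂ) := by
  have hrC : (r : ℂ) ≠ 0 := Complex.ofReal_ne_zero.mpr hr
  simp only [Complex.ofReal_add, Complex.ofReal_pow, ← Complex.conj_mul', Complex.real_smul,
    map_sub, map_mul, Complex.conj_ofReal]
  push_cast
  field_simp
  ring

theorem stmt_3_general (a b : ℝ) (φ : ℝ → ℝ) (hφ : ContDiff ℝ 1 φ)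
    (hφpos : ∀ ξ ∈ Icc a b, 0 < φ ξ)
    (f : ℝ × ℝ → ℂ) (hf : ContDiff ℝ 1 f)
    (F : ℝ × ℝ → ℂ) (hF : ∀ p : ℝ × ℝ, F p = f (p.1, p.2 / φ p.1)) :
    (∫ p in {q : ℝ × ℝ | a < q.1 ∧ q.1 < b ∧ 0 < q.2 ∧ q.2 < φ q.1},
        ((‖fderiv ℝ F p (1, 0)‖ ^ 2 + ‖fderiv ℝ F p (0, 1)‖ ^ 2 : ℝ) : ℂ))
      = ∫ p in Ioo a b ×ˢ Ioo (0 : ℝ) 1,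
          ((starRingEnd ℂ) (fderiv ℝ f p (1, 0)) * fderiv ℝ f p (1, 0)
            + ((-(deriv φ p.1 * p.2 / φ p.1) : ℝ) : ℂ) *
                ((starRingEnd ℂ) (fderiv ℝ f p (1, 0)) * fderiv ℝ f p (0, 1)
                  + (starRingEnd ℂ) (fderiv ℝ f p (0, 1)) * fderiv ℝ f p (1, 0))
            + (((1 + (deriv φ p.1 * p.2) ^ 2) / φ p.1 ^ 2 : ℝ) : ℂ) *
                ((starRingEnd ℂ) (fderiv ℝ f p (0, 1)) * fderiv ℝ f p (0, 1)))
          * ((φ p.1 : ℝ) : ℂ) := by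
  have hφd : Differentiable ℝ φ := hφ.differentiable one_ne_zero
  have hpos : ∀ x ∈ Ioo a b, 0 < φ x := fun x hx => hφpos x (Ioo_subset_Icc_self hx)
  have hs : MeasurableSet (Ioo a b ×ˢ Ioo (0 : ℝ) 1) := measurableSet_Ioo.prod measurableSet_Ioo
  obtain rfl : F = fun p => f (p.1, p.2 / φ p.1) := funext hF
  rw [← image_fiber_mul_Ioo_prod_Ioo hpos,
    integral_image_eq_integral_abs_det_fderiv_smul volume hs
      (fun p _ => (hasFDerivAt_fiber_mul (hφd p.1)).hasFDerivWithinAt)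
      (injOn_fiber_mul fun q hq => (hpos q.1 hq.1).ne')]
  refine setIntegral_congr_fun hs fun ⟨x, y⟩ hp => ?_
  have hx : 0 < φ x := hpos x hp.1
  have hfd : DifferentiableAt ℝ f (x, y) := hf.differentiable one_ne_zero _
  simp only [det_fst_prod_smul_fst_add_smul_snd, abs_of_pos hx,
    fderiv_comp_fiber_div_apply_one_zero hfd (hφd x) hx.ne',
    fderiv_comp_fiber_div_apply_zero_one hfd (hφd x) hx.ne']
  exact real_smul_ofReal_sq_norm_sub_smul_add_sq_norm_inv_smul _ _ _ _ _ hx.ne'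

/-- Change of variables in the Dirichlet form: for C¹ f compactly supported in Ω₀ and
F(ξ,η) = f(ξ, η/φ(ξ)), the Dirichlet integral of F over Ω equals
∫_{Ω₀} (A ∇f)·∇f̄ · φ(x) dx dy with A = [[1, −φ'y/φ], [−φ'y/φ, (1+(φ'y)²)/φ²]]. -/
theorem stmt_3 (a b : ℝ) (hab : a < b) (φ : ℝ → ℝ) (hφ : ContDiff ℝ 1 φ)
    (hφpos : ∀ ξ ∈ Icc a b, 0 < φ ξ)
    (f : ℝ × ℝ → ℂ) (hf : ContDiff ℝ 1 f) (hcs : HasCompactSupport f)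
    (hsupp : tsupport f ⊆ Ioo a b ×ˢ Ioo (0 : ℝ) 1)
    (F : ℝ × ℝ → ℂ) (hF : ∀ p : ℝ × ℝ, F p = f (p.1, p.2 / φ p.1)) :
    (∫ p in {q : ℝ × ℝ | a < q.1 ∧ q.1 < b ∧ 0 < q.2 ∧ q.2 < φ q.1},
        ((‖fderiv ℝ F p (1, 0)‖ ^ 2 + ‖fderiv ℝ F p (0, 1)‖ ^ 2 : ℝ) : ℂ))
      = ∫ p in Ioo a b ×ˢ Ioo (0 : ℝ) 1,
          ((starRingEnd ℂ) (fderiv ℝ f p (1, 0)) * fderiv ℝ f p (1, 0)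
            + ((-(deriv φ p.1 * p.2 / φ p.1) : ℝ) : ℂ) *
                ((starRingEnd ℂ) (fderiv ℝ f p (1, 0)) * fderiv ℝ f p (0, 1)
                  + (starRingEnd ℂ) (fderiv ℝ f p (0, 1)) * fderiv ℝ f p (1, 0))
            + (((1 + (deriv φ p.1 * p.2) ^ 2) / φ p.1 ^ 2 : ℝ) : ℂ) *
                ((starRingEnd ℂ) (fderiv ℝ f p (0, 1)) * fderiv ℝ f p (0, 1)))
          * ((φ p.1 : ℝ) : ℂ) :=
  stmt_3_general a b φ hφ hφpos f hf F hF
end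

section
/- Let N be a positive integer, let h_1, …, h_N : [a,b] → ℂ be continuously differentiable, and let f(x,y) = Σ_{k=1}^N h_k(x) √2 sin(πky). Then ∫_{Ω₀} [ (A ∇f) · ∇\overline{f} − λ |f|² ] φ(x) dx dy = ∫_a^b [ Σ_{k=1}^N ( |h_k'(x)|² + ((πk/φ(x))² − λ) |h_k(x)|² ) + Σ_{k,r=1}^N ( (φ'(x)²/φ(x)²) π² k r β^{22}_{kr} \overline{h_k(x)} h_r(x) − (φ'(x)/φ(x)) π ( r β^{12}_{kr} \overline{h_k'(x)} h_r(x) + k β^{12}_{rk} \overline{h_k(x)} h_r'(x) ) ) ] φ(x) dx. -/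
/-!
On `Ω₀` the partial derivatives of `f` are `∂ₓf = Σ hₖ' sₖ` and `∂_y f = Σ hₖ sₖ'` with
`sₖ(y) = √2 sin(πky)`. The integrand agrees inside `Ω₀` with a function continuous on the closed
rectangle (use `derivWithin` on `[a, b]`), so Fubini applies. For fixed `x` the inner integrand is
a combination of the sesquilinear expressions `w(y) · conj(Σ uₖ aₖ(y)) · Σ vᵣ bᵣ(y)`, whose
integrals are `Σₖ Σᵣ conj uₖ vᵣ ∫ w aₖ bᵣ`. With weight `1` the orthonormality of
`√2 sin(πky)` and of `√2 cos(πky)` on `(0, 1)` leaves the diagonal sum; the weights `y` and `y²`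
produce `β¹²` and `β²²`.
-/

open Set Real MeasureTheory ComplexConjugate

theorem integral_conj_sum_mul_sum {ι : Type*} (s : Finset ι) {α β : ℝ} {w : ℝ → ℝ}
    {e₁ e₂ : ι → ℝ → ℝ} (hw : Continuous w) (he₁ : ∀ k, Continuous (e₁ k))
    (he₂ : ∀ k, Continuous (e₂ k)) (u v : ι → ℂ) :
    ∫ y in α..β, (w y : ℂ) * (conj (∑ k ∈ s, u k * e₁ k y) * ∑ r ∈ s, v r * e₂ r y)
      = ∑ k ∈ s, ∑ r ∈ s, conj (u k) * v r * ((∫ y in α..β, w y * e₁ k y * e₂ r y : ℝ) : ℂ) := by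
  have hexpand : ∀ y, (w y : ℂ) * (conj (∑ k ∈ s, u k * e₁ k y) * ∑ r ∈ s, v r * e₂ r y)
      = ∑ k ∈ s, ∑ r ∈ s, conj (u k) * v r * ((w y * e₁ k y * e₂ r y : ℝ) : ℂ) := by
    intro y
    rw [map_sum, Finset.sum_mul_sum, Finset.mul_sum]
    refine Finset.sum_congr rfl fun k _ => ?_
    rw [Finset.mul_sum]
    refine Finset.sum_congr rfl fun r _ => ?_
    simp only [map_mul, Complex.conj_ofReal]
    push_cast
    ring
  have hcont : ∀ k r, Continuous fun y => conj (u k) * v r * ((w y * e₁ k y * e₂ r y : ℝ) : ℂ) :=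
    fun k r =>
      continuous_const.mul (Complex.continuous_ofReal.comp ((hw.mul (he₁ k)).mul (he₂ r)))
  simp_rw [hexpand]
  rw [intervalIntegral.integral_finsetSum fun k _ =>
    (continuous_finsetSum _ fun r _ => hcont k r).intervalIntegrable _ _]
  refine Finset.sum_congr rfl fun k _ => ?_
  rw [intervalIntegral.integral_finsetSum fun r _ => (hcont k r).intervalIntegrable _ _]
  refine Finset.sum_congr rfl fun r _ => ?_
  rw [intervalIntegral.integral_const_mul, intervalIntegral.integral_ofReal]

theorem integral_conj_sum_mul_sum_of_orthogonal {ι : Type*} [DecidableEq ι] (s : Finset ι)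
    {α β : ℝ} {e : ι → ℝ → ℝ} (he : ∀ k, Continuous (e k)) {n : ι → ℝ}
    (horth : ∀ k ∈ s, ∀ r ∈ s, ∫ y in α..β, e k y * e r y = if k = r then n k else 0)
    (u v : ι → ℂ) :
    ∫ y in α..β, conj (∑ k ∈ s, u k * e k y) * ∑ r ∈ s, v r * e r y
      = ∑ k ∈ s, conj (u k) * v k * n k := by
  have hgram := integral_conj_sum_mul_sum s continuous_const he he u v (w := fun _ => 1)
    (α := α) (β := β)
  simp only [Complex.ofReal_one, one_mul] at hgram
  rw [hgram]
  refine Finset.sum_congr rfl fun k hk => ?_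
  rw [Finset.sum_congr rfl fun r hr => by rw [horth k hk r hr]]
  simp [apply_ite, hk]

theorem integral_cos_pi_int_mul (m : ℤ) :
    ∫ y in (0:ℝ)..1, cos (π * m * y) = if m = 0 then 1 else 0 := by
  split_ifs with hm
  · simp [hm]
  · have hπm : π * m ≠ 0 := mul_ne_zero pi_ne_zero (Int.cast_ne_zero.mpr hm)
    have := intervalIntegral.integral_comp_mul_left (a := 0) (b := 1) cos hπm
    simp only [integral_cos, mul_zero, mul_one, sin_zero, sub_zero, mul_comm π (m : ℝ),
      sin_int_mul_pi, smul_zero] at this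
    simpa [mul_comm (m : ℝ) π] using this

noncomputable def sinMode (k : ℕ) (y : ℝ) : ℝ := √2 * sin (π * k * y)

noncomputable def cosMode (k : ℕ) (y : ℝ) : ℝ := √2 * cos (π * k * y)

theorem hasDerivAt_sinMode (k : ℕ) (y : ℝ) :
    HasDerivAt (sinMode k) (π * k * cosMode k y) y := by
  have hlin : HasDerivAt (fun y : ℝ => π * k * y) (π * k) y := by
    simpa using (hasDerivAt_id y).const_mul (π * k)
  refine (hlin.sin.const_mul √2).congr_deriv ?_
  rw [cosMode]
  ring

@[fun_prop]
theorem continuous_sinMode (k : ℕ) : Continuous (sinMode k) := by unfold sinMode; fun_prop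

@[fun_prop]
theorem continuous_cosMode (k : ℕ) : Continuous (cosMode k) := by unfold cosMode; fun_prop

theorem sinMode_mul_sinMode (k r : ℕ) (y : ℝ) :
    sinMode k y * sinMode r y
      = cos (π * ((k - r : ℤ) : ℝ) * y) - cos (π * ((k + r : ℤ) : ℝ) * y) := by
  have h2 : √2 * √2 = 2 := Real.mul_self_sqrt (by norm_num)
  push_cast
  rw [show π * (k - r) * y = π * k * y - π * r * y by ring,
    show π * (k + r) * y = π * k * y + π * r * y by ring, cos_sub, cos_add]
  unfold sinMode
  linear_combination (sin (π * k * y) * sin (π * r * y)) * h2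

theorem cosMode_mul_cosMode (k r : ℕ) (y : ℝ) :
    cosMode k y * cosMode r y
      = cos (π * ((k - r : ℤ) : ℝ) * y) + cos (π * ((k + r : ℤ) : ℝ) * y) := by
  have h2 : √2 * √2 = 2 := Real.mul_self_sqrt (by norm_num)
  push_cast
  rw [show π * (k - r) * y = π * k * y - π * r * y by ring,
    show π * (k + r) * y = π * k * y + π * r * y by ring, cos_sub, cos_add]
  unfold cosMode
  linear_combination (cos (π * k * y) * cos (π * r * y)) * h2

theorem integral_sinMode_mul_sinMode {k r : ℕ} (hk : k ≠ 0) :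
    ∫ y in (0:ℝ)..1, sinMode k y * sinMode r y = if k = r then 1 else 0 := by
  simp_rw [sinMode_mul_sinMode]
  rw [intervalIntegral.integral_sub (by apply Continuous.intervalIntegrable; fun_prop)
    (by apply Continuous.intervalIntegrable; fun_prop), integral_cos_pi_int_mul,
    integral_cos_pi_int_mul]
  have hkr : (k + r : ℤ) ≠ 0 := by omega
  simp [hkr, sub_eq_zero]

theorem integral_cosMode_mul_cosMode {k r : ℕ} (hk : k ≠ 0) :
    ∫ y in (0:ℝ)..1, cosMode k y * cosMode r y = if k = r then 1 else 0 := by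
  simp_rw [cosMode_mul_cosMode]
  rw [intervalIntegral.integral_add (by apply Continuous.intervalIntegrable; fun_prop)
    (by apply Continuous.intervalIntegrable; fun_prop), integral_cos_pi_int_mul,
    integral_cos_pi_int_mul]
  have hkr : (k + r : ℤ) ≠ 0 := by omega
  simp [hkr, sub_eq_zero]

noncomputable def beta12 (k r : ℕ) : ℝ :=
  ∫ y in (0:ℝ)..1, 2 * y * sin (π * k * y) * cos (π * r * y)

noncomputable def beta22 (k r : ℕ) : ℝ :=
  ∫ y in (0:ℝ)..1, 2 * y ^ 2 * cos (π * k * y) * cos (π * r * y)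

theorem integral_deriv_sinMode_mul_deriv_sinMode {k r : ℕ} (hk : k ≠ 0) :
    ∫ y in (0:ℝ)..1, (π * k * cosMode k y) * (π * r * cosMode r y)
      = if k = r then (π * k) ^ 2 else 0 := by
  simp_rw [show ∀ y, (π * k * cosMode k y) * (π * r * cosMode r y)
    = (π * k) * (π * r) * (cosMode k y * cosMode r y) from fun y => by ring]
  rw [intervalIntegral.integral_const_mul, integral_cosMode_mul_cosMode hk]
  split_ifs with hkr
  · rw [hkr]; ring
  · ring

theorem integral_mul_sinMode_mul_deriv_sinMode (k r : ℕ) :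
    ∫ y in (0:ℝ)..1, y * sinMode k y * (π * r * cosMode r y) = π * r * beta12 k r := by
  rw [beta12, ← intervalIntegral.integral_const_mul]
  congr 1 with y
  have h2 : √2 * √2 = 2 := Real.mul_self_sqrt (by norm_num)
  simp only [sinMode, cosMode]
  linear_combination (y * π * r * sin (π * k * y) * cos (π * r * y)) * h2

theorem integral_mul_deriv_sinMode_mul_sinMode (k r : ℕ) :
    ∫ y in (0:ℝ)..1, y * (π * k * cosMode k y) * sinMode r y = π * k * beta12 r k := by
  rw [← integral_mul_sinMode_mul_deriv_sinMode]
  congr 1 with y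
  ring

theorem integral_sq_mul_deriv_sinMode_mul_deriv_sinMode (k r : ℕ) :
    ∫ y in (0:ℝ)..1, y ^ 2 * (π * k * cosMode k y) * (π * r * cosMode r y)
      = π ^ 2 * k * r * beta22 k r := by
  rw [beta22, ← intervalIntegral.integral_const_mul]
  congr 1 with y
  have h2 : √2 * √2 = 2 := Real.mul_self_sqrt (by norm_num)
  simp only [cosMode]
  linear_combination (y ^ 2 * π ^ 2 * k * r * cos (π * k * y) * cos (π * r * y)) * h2

/-- The integrand `(A∇f · ∇f̄ - λ|f|²) φ` at a point `(x, y)`, written in terms of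
`P = φ x`, `Q = φ' x`, `X = ∂ₓf`, `Y = ∂_y f` and `F = f`. -/
noncomputable def formDensity (lam P Q y : ℝ) (X Y F : ℂ) : ℂ :=
  (conj X * X + ((-(Q * y / P) : ℝ) : ℂ) * (conj X * Y + conj Y * X)
      + (((1 + (Q * y) ^ 2) / P ^ 2 : ℝ) : ℂ) * (conj Y * Y) - lam * ((‖F‖ ^ 2 : ℝ) : ℂ)) * P

theorem formDensity_eq {P : ℝ} (hP : P ≠ 0) (lam Q y : ℝ) (X Y F : ℂ) :
    formDensity lam P Q y X Y F
      = P * (conj X * X) + (P⁻¹ : ℝ) * (conj Y * Y) - (lam * P : ℝ) * (conj F * F)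
        - Q * (y * (conj X * Y)) - Q * (y * (conj Y * X))
        + (Q ^ 2 / P : ℝ) * ((y ^ 2 : ℝ) * (conj Y * Y)) := by
  have hPc : (P : ℂ) ≠ 0 := Complex.ofReal_ne_zero.mpr hP
  rw [formDensity, Complex.conj_mul' F]
  push_cast
  field_simp
  ring

theorem integral_formDensity_sinModes (lam : ℝ) {P : ℝ} (hP : P ≠ 0) (Q : ℝ) (N : ℕ)
    (c d : ℕ → ℂ) :
    ∫ y in (0:ℝ)..1, formDensity lam P Q y (∑ k ∈ Finset.Icc 1 N, d k * sinMode k y)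
        (∑ k ∈ Finset.Icc 1 N, c k * (π * k * cosMode k y : ℝ))
        (∑ k ∈ Finset.Icc 1 N, c k * sinMode k y)
      = ((∑ k ∈ Finset.Icc 1 N, ((‖d k‖ ^ 2 + ((π * k / P) ^ 2 - lam) * ‖c k‖ ^ 2 : ℝ) : ℂ))
          + ∑ k ∈ Finset.Icc 1 N, ∑ r ∈ Finset.Icc 1 N,
              ((((Q ^ 2 / P ^ 2) * π ^ 2 * k * r * beta22 k r : ℝ) : ℂ) * conj (c k) * c r
                - ((Q / P * π : ℝ) : ℂ) * ((r : ℂ) * (beta12 k r : ℂ) * conj (d k) * c r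
                  + (k : ℂ) * (beta12 r k : ℂ) * conj (c k) * d r))) * P := by
  set s := Finset.Icc 1 N
  have hs : ∀ k ∈ s, k ≠ 0 := fun k hk => Nat.one_le_iff_ne_zero.mp (Finset.mem_Icc.mp hk).1
  have hcos : ∀ k, Continuous fun y => π * k * cosMode k y := fun k => by fun_prop
  have hX := integral_conj_sum_mul_sum_of_orthogonal s (α := 0) (β := 1) continuous_sinMode
    (fun k hk r _ => integral_sinMode_mul_sinMode (r := r) (hs k hk)) d d
  have hF := integral_conj_sum_mul_sum_of_orthogonal s (α := 0) (β := 1) continuous_sinMode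
    (fun k hk r _ => integral_sinMode_mul_sinMode (r := r) (hs k hk)) c c
  have hY := integral_conj_sum_mul_sum_of_orthogonal s (α := 0) (β := 1) hcos
    (fun k hk r _ => integral_deriv_sinMode_mul_deriv_sinMode (r := r) (hs k hk)) c c
  have hXY := integral_conj_sum_mul_sum s (α := 0) (β := 1) continuous_id continuous_sinMode
    hcos d c
  have hYX := integral_conj_sum_mul_sum s (α := 0) (β := 1) continuous_id hcos continuous_sinMode
    c d
  have hYY := integral_conj_sum_mul_sum s (α := 0) (β := 1) (continuous_pow 2) hcos hcos c c
  simp only [id, integral_mul_sinMode_mul_deriv_sinMode, integral_mul_deriv_sinMode_mul_sinMode,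
    integral_sq_mul_deriv_sinMode_mul_deriv_sinMode] at hXY hYX hYY
  simp_rw [formDensity_eq hP]
  rw [intervalIntegral.integral_add, intervalIntegral.integral_sub, intervalIntegral.integral_sub,
    intervalIntegral.integral_sub, intervalIntegral.integral_add]
  · simp only [intervalIntegral.integral_const_mul, hX, hY, hF, hXY, hYX, hYY]
    simp only [Finset.mul_sum, Finset.sum_mul, add_mul, sub_mul, ← Finset.sum_add_distrib,
      ← Finset.sum_sub_distrib]
    refine Finset.sum_congr rfl fun k _ => ?_
    -- both sides: the diagonal term of the `k`-th row plus a single sum over `r`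
    rw [sub_sub, ← Finset.sum_add_distrib, sub_add_eq_add_sub, add_sub_assoc,
      ← Finset.sum_sub_distrib]
    have hPc : (P : ℂ) ≠ 0 := Complex.ofReal_ne_zero.mpr hP
    congr 1
    · simp only [Complex.conj_mul']
      push_cast
      field_simp
      ring
    · refine Finset.sum_congr rfl fun r _ => ?_
      push_cast
      field_simp
  all_goals exact Continuous.intervalIntegrable (by fun_prop) _ _

theorem fderiv_sum_mul_apply {ι : Type*} (s : Finset ι) {g : ι → ℝ → ℂ} {e : ι → ℝ → ℝ}
    {g' : ι → ℂ} {e' : ι → ℝ} {p : ℝ × ℝ} (hg : ∀ k ∈ s, HasDerivAt (g k) (g' k) p.1)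
    (he : ∀ k ∈ s, HasDerivAt (e k) (e' k) p.2) (v : ℝ × ℝ) :
    fderiv ℝ (fun q : ℝ × ℝ => ∑ k ∈ s, g k q.1 * e k q.2) p v
      = ∑ k ∈ s, (g' k * e k p.2 * v.1 + g k p.1 * e' k * v.2) := by
  have hterm : ∀ k ∈ s, HasFDerivAt (fun q : ℝ × ℝ => g k q.1 * e k q.2)
      (g k p.1 • (ContinuousLinearMap.toSpanSingleton ℝ (e' k : ℂ)).comp
          (ContinuousLinearMap.snd ℝ ℝ ℝ)
        + (e k p.2 : ℂ) • (ContinuousLinearMap.toSpanSingleton ℝ (g' k)).comp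
          (ContinuousLinearMap.fst ℝ ℝ ℝ)) p := fun k hk =>
    ((hg k hk).hasFDerivAt.comp p hasFDerivAt_fst).mul
      ((he k hk).ofReal_comp.hasFDerivAt.comp p hasFDerivAt_snd)
  rw [(HasFDerivAt.fun_sum hterm).fderiv]
  simp only [sum_apply, add_apply, smul_apply, ContinuousLinearMap.comp_apply,
    ContinuousLinearMap.coe_fst', ContinuousLinearMap.coe_snd',
    ContinuousLinearMap.toSpanSingleton_apply, smul_eq_mul, Complex.real_smul]
  refine Finset.sum_congr rfl fun k _ => ?_
  ring

theorem ContinuousOn.formDensity {α : Type*} [TopologicalSpace α] {s : Set α} {P Q y : α → ℝ}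
    {X Y F : α → ℂ} (hP : ContinuousOn P s) (hQ : ContinuousOn Q s) (hy : ContinuousOn y s)
    (hX : ContinuousOn X s) (hY : ContinuousOn Y s) (hF : ContinuousOn F s)
    (hP₀ : ∀ p ∈ s, P p ≠ 0) (lam : ℝ) :
    ContinuousOn (fun p => formDensity lam (P p) (Q p) (y p) (X p) (Y p) (F p)) s := by
  have hcoupling : ContinuousOn (fun p => -(Q p * y p / P p)) s := ((hQ.mul hy).div hP hP₀).neg
  have hvertical : ContinuousOn (fun p => (1 + (Q p * y p) ^ 2) / P p ^ 2) s :=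
    (continuousOn_const.add ((hQ.mul hy).pow 2)).div (hP.pow 2) fun p hp =>
      pow_ne_zero 2 (hP₀ p hp)
  unfold _root_.formDensity
  fun_prop

theorem integrableOn_formDensity {a b : ℝ} (hab : a < b) {φ : ℝ → ℝ}
    (hφ : ContDiffOn ℝ 1 φ (Icc a b)) (hφ₀ : ∀ x ∈ Icc a b, φ x ≠ 0) {s : Finset ℕ}
    {h : ℕ → ℝ → ℂ} (hh : ∀ k ∈ s, ContDiffOn ℝ 1 (h k) (Icc a b)) {e e' : ℕ → ℝ → ℝ}
    (he : ∀ k, Continuous (e k)) (he' : ∀ k, Continuous (e' k)) (lam c d : ℝ) :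
    IntegrableOn (fun p : ℝ × ℝ => formDensity lam (φ p.1) (deriv φ p.1) p.2
        (∑ k ∈ s, deriv (h k) p.1 * e k p.2) (∑ k ∈ s, h k p.1 * e' k p.2)
        (∑ k ∈ s, h k p.1 * e k p.2)) (Ioo a b ×ˢ Ioo c d) := by
  set K := Icc a b ×ˢ Icc c d
  have hfst : MapsTo Prod.fst K (Icc a b) := fun p hp => hp.1
  have hdφ := (hφ.continuousOn_derivWithin (uniqueDiffOn_Icc hab) le_rfl).comp
    continuous_fst.continuousOn hfst
  have hdh : ∀ k ∈ s, ContinuousOn (fun p : ℝ × ℝ => derivWithin (h k) (Icc a b) p.1) K :=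
    fun k hk => ((hh k hk).continuousOn_derivWithin (uniqueDiffOn_Icc hab) le_rfl).comp
      continuous_fst.continuousOn hfst
  have hh' : ∀ k ∈ s, ContinuousOn (fun p : ℝ × ℝ => h k p.1) K :=
    fun k hk => (hh k hk).continuousOn.comp continuous_fst.continuousOn hfst
  have hcont : ContinuousOn (fun p : ℝ × ℝ => formDensity lam (φ p.1)
      (derivWithin φ (Icc a b) p.1) p.2 (∑ k ∈ s, derivWithin (h k) (Icc a b) p.1 * e k p.2)
      (∑ k ∈ s, h k p.1 * e' k p.2) (∑ k ∈ s, h k p.1 * e k p.2)) K := by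
    refine .formDensity (hφ.continuousOn.comp continuous_fst.continuousOn hfst) hdφ
      continuous_snd.continuousOn ?_ ?_ ?_ (fun p hp => hφ₀ p.1 hp.1) lam
    all_goals refine continuousOn_finsetSum _ fun k hk => ?_
    · exact (hdh k hk).mul (by fun_prop)
    · exact (hh' k hk).mul (by fun_prop)
    · exact (hh' k hk).mul (by fun_prop)
  refine ((hcont.integrableOn_compact (isCompact_Icc.prod isCompact_Icc)).mono_set
    (prod_mono Ioo_subset_Icc_self Ioo_subset_Icc_self)).congr_fun (fun p hp => ?_)
    (measurableSet_Ioo.prod measurableSet_Ioo)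
  simp only [derivWithin_of_mem_nhds (Icc_mem_nhds hp.1.1 hp.1.2)]

theorem stmt_8_general (a b : ℝ) (hab : a < b) (φ : ℝ → ℝ)
    (hφ : ContDiffOn ℝ 1 φ (Icc a b)) (hφpos : ∀ x ∈ Icc a b, 0 < φ x)
    (lam : ℝ) (N : ℕ) (h : ℕ → ℝ → ℂ)
    (hh : ∀ k ∈ Finset.Icc 1 N, ContDiffOn ℝ 1 (h k) (Icc a b))
    (f : ℝ × ℝ → ℂ)
    (hf : ∀ p : ℝ × ℝ, f p = ∑ k ∈ Finset.Icc 1 N,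
      h k p.1 * Complex.ofReal (Real.sqrt 2 * Real.sin (π * k * p.2))) :
    (∫ p in Ioo a b ×ˢ Ioo (0 : ℝ) 1,
        ((starRingEnd ℂ) (fderiv ℝ f p (1, 0)) * fderiv ℝ f p (1, 0)
          + Complex.ofReal (-(deriv φ p.1 * p.2 / φ p.1)) *
              ((starRingEnd ℂ) (fderiv ℝ f p (1, 0)) * fderiv ℝ f p (0, 1)
                + (starRingEnd ℂ) (fderiv ℝ f p (0, 1)) * fderiv ℝ f p (1, 0))
          + Complex.ofReal ((1 + (deriv φ p.1 * p.2) ^ 2) / φ p.1 ^ 2) *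
              ((starRingEnd ℂ) (fderiv ℝ f p (0, 1)) * fderiv ℝ f p (0, 1))
          - Complex.ofReal lam * Complex.ofReal (‖f p‖ ^ 2))
        * Complex.ofReal (φ p.1))
      = ∫ x in Ioo a b,
          ((∑ k ∈ Finset.Icc 1 N,
              Complex.ofReal
                (‖deriv (h k) x‖ ^ 2 + ((π * k / φ x) ^ 2 - lam) * ‖h k x‖ ^ 2))
            + ∑ k ∈ Finset.Icc 1 N, ∑ r ∈ Finset.Icc 1 N,
                (Complex.ofReal ((deriv φ x ^ 2 / φ x ^ 2) * π ^ 2 * k * r *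
                    (∫ y in (0:ℝ)..1, 2 * y ^ 2 * Real.cos (π * k * y) * Real.cos (π * r * y)))
                  * (starRingEnd ℂ) (h k x) * h r x
                - Complex.ofReal (deriv φ x / φ x * π) *
                    ((r : ℂ) *
                        Complex.ofReal (∫ y in (0:ℝ)..1,
                            2 * y * Real.sin (π * k * y) * Real.cos (π * r * y))
                        * (starRingEnd ℂ) (deriv (h k) x) * h r x
                      + (k : ℂ) *
                        Complex.ofReal (∫ y in (0:ℝ)..1,
                            2 * y * Real.sin (π * r * y) * Real.cos (π * k * y))
                        * (starRingEnd ℂ) (h k x) * deriv (h r) x)))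
          * Complex.ofReal (φ x) := by
  obtain rfl : f = fun p => ∑ k ∈ Finset.Icc 1 N, h k p.1 * (sinMode k p.2 : ℂ) := funext hf
  have hderiv : ∀ k ∈ Finset.Icc 1 N, ∀ x ∈ Ioo a b, HasDerivAt (h k) (deriv (h k) x) x :=
    fun k hk x hx => ((hh k hk).differentiableOn one_ne_zero x (Ioo_subset_Icc_self hx))
      |>.differentiableAt (Icc_mem_nhds hx.1 hx.2) |>.hasDerivAt
  set G : ℝ × ℝ → ℂ := fun p => formDensity lam (φ p.1) (deriv φ p.1) p.2
    (∑ k ∈ Finset.Icc 1 N, deriv (h k) p.1 * sinMode k p.2)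
    (∑ k ∈ Finset.Icc 1 N, h k p.1 * (π * k * cosMode k p.2 : ℝ))
    (∑ k ∈ Finset.Icc 1 N, h k p.1 * sinMode k p.2)
  have hG : IntegrableOn G (Ioo a b ×ˢ Ioo 0 1) :=
    integrableOn_formDensity hab hφ (fun x hx => (hφpos x hx).ne') hh (e := sinMode)
      (e' := fun k y => π * k * cosMode k y) continuous_sinMode (fun k => by fun_prop) lam 0 1
  rw [setIntegral_congr_fun (measurableSet_Ioo.prod measurableSet_Ioo) (g := G) ?_,
    Measure.volume_eq_prod, setIntegral_prod G hG]
  · refine setIntegral_congr_fun measurableSet_Ioo fun x hx => ?_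
    rw [← integral_Ioc_eq_integral_Ioo, ← intervalIntegral.integral_of_le zero_le_one]
    exact integral_formDensity_sinModes lam (hφpos x (Ioo_subset_Icc_self hx)).ne' (deriv φ x) N
      (h · x) (fun k => deriv (h k) x)
  · intro p hp
    have hfd := fderiv_sum_mul_apply _ (fun k hk => hderiv k hk p.1 hp.1)
      (fun k _ => hasDerivAt_sinMode k p.2)
    simp only [G, formDensity, hfd, mul_one, mul_zero, add_zero, zero_add, Complex.ofReal_one,
      Complex.ofReal_zero]

/-- Discretisation of the quadratic form: for f(x,y) = Σ_{k=1}^N h_k(x) √2 sin(πky),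
∫_{Ω₀} [(A∇f)·∇f̄ − λ|f|²] φ dx dy equals the one-dimensional integral
∫_a^b [ Σ_k (|h_k'|² + ((πk/φ)² − λ)|h_k|²)
  + Σ_{k,r} ((φ'²/φ²) π²kr β²²_{kr} h̄_k h_r
      − (φ'/φ) π (r β¹²_{kr} h̄_k' h_r + k β¹²_{rk} h̄_k h_r')) ] φ dx. -/
theorem stmt_8 (a b : ℝ) (hab : a < b) (φ : ℝ → ℝ)
    (hφ : ContDiffOn ℝ 1 φ (Icc a b)) (hφpos : ∀ x ∈ Icc a b, 0 < φ x)
    (lam : ℝ) (N : ℕ) (hN : 1 ≤ N) (h : ℕ → ℝ → ℂ)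
    (hh : ∀ k ∈ Finset.Icc 1 N, ContDiffOn ℝ 1 (h k) (Icc a b))
    (f : ℝ × ℝ → ℂ)
    (hf : ∀ p : ℝ × ℝ, f p = ∑ k ∈ Finset.Icc 1 N,
      h k p.1 * Complex.ofReal (Real.sqrt 2 * Real.sin (π * k * p.2))) :
    (∫ p in Ioo a b ×ˢ Ioo (0 : ℝ) 1,
        ((starRingEnd ℂ) (fderiv ℝ f p (1, 0)) * fderiv ℝ f p (1, 0)
          + Complex.ofReal (-(deriv φ p.1 * p.2 / φ p.1)) *
              ((starRingEnd ℂ) (fderiv ℝ f p (1, 0)) * fderiv ℝ f p (0, 1)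
                + (starRingEnd ℂ) (fderiv ℝ f p (0, 1)) * fderiv ℝ f p (1, 0))
          + Complex.ofReal ((1 + (deriv φ p.1 * p.2) ^ 2) / φ p.1 ^ 2) *
              ((starRingEnd ℂ) (fderiv ℝ f p (0, 1)) * fderiv ℝ f p (0, 1))
          - Complex.ofReal lam * Complex.ofReal (‖f p‖ ^ 2))
        * Complex.ofReal (φ p.1))
      = ∫ x in Ioo a b,
          ((∑ k ∈ Finset.Icc 1 N,
              Complex.ofReal
                (‖deriv (h k) x‖ ^ 2 + ((π * k / φ x) ^ 2 - lam) * ‖h k x‖ ^ 2))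
            + ∑ k ∈ Finset.Icc 1 N, ∑ r ∈ Finset.Icc 1 N,
                (Complex.ofReal ((deriv φ x ^ 2 / φ x ^ 2) * π ^ 2 * k * r *
                    (∫ y in (0:ℝ)..1, 2 * y ^ 2 * Real.cos (π * k * y) * Real.cos (π * r * y)))
                  * (starRingEnd ℂ) (h k x) * h r x
                - Complex.ofReal (deriv φ x / φ x * π) *
                    ((r : ℂ) *
                        Complex.ofReal (∫ y in (0:ℝ)..1,
                            2 * y * Real.sin (π * k * y) * Real.cos (π * r * y))
                        * (starRingEnd ℂ) (deriv (h k) x) * h r x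
                      + (k : ℂ) *
                        Complex.ofReal (∫ y in (0:ℝ)..1,
                            2 * y * Real.sin (π * r * y) * Real.cos (π * k * y))
                        * (starRingEnd ℂ) (h k x) * deriv (h r) x)))
          * Complex.ofReal (φ x) :=
  stmt_8_general a b hab φ hφ hφpos lam N h hh f hf
end

section
/- Let N ≥ 1 and let M : [a,b] → ℂ^{2N×2N} be continuous. Suppose ψ̃ : [a,b] → ℂ^{N×2N} is continuously differentiable, ψ̃(x) ψ̃(x)* is invertible for every x ∈ [a,b], and ψ̃ satisfies the orthogonal transfer equation ψ̃' + ψ̃ M (I − ψ̃*(ψ̃ ψ̃*)⁻¹ ψ̃) = 0 on [a,b]. Then ψ̃(x) ψ̃(x)* is constant on [a,b]. -/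
/-!
With `P = I − ψ*(ψψ*)⁻¹ψ` the orthogonal projection onto `ker ψ`, we have `Pψ* = 0`, so the
derivative `ψ'ψ* + ψψ'* = -(ψMPψ*) - (ψMPψ*)*` of `ψψ*` vanishes on `[a, b]`.
-/

open Set Matrix

theorem Matrix.one_sub_conjTranspose_mul_inv_mul_mul_conjTranspose
    {R m n : Type*} [CommRing R] [StarRing R] [Fintype m] [Fintype n]
    [DecidableEq m] [DecidableEq n] {A : Matrix m n R} (hA : IsUnit (A * Aᴴ)) :
    (1 - Aᴴ * (A * Aᴴ)⁻¹ * A) * Aᴴ = 0 := by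
  rw [Matrix.sub_mul, Matrix.one_mul, Matrix.mul_assoc, Matrix.mul_assoc,
    nonsing_inv_mul _ ((isUnit_iff_isUnit_det _).mp hA), Matrix.mul_one, sub_self]

theorem hasDerivAt_mul_conjTranspose_apply {𝕜 m n : Type*} [RCLike 𝕜] [Fintype n]
    {f : ℝ → Matrix m n 𝕜} {f' : Matrix m n 𝕜} {x : ℝ}
    (hf : ∀ i j, HasDerivAt (fun t => f t i j) (f' i j) x) (i k : m) :
    HasDerivAt (fun t => (f t * (f t)ᴴ) i k) ((f' * (f x)ᴴ + f x * f'ᴴ) i k) x := by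
  simp only [Matrix.add_apply, mul_apply, conjTranspose_apply, ← Finset.sum_add_distrib]
  exact HasDerivAt.fun_sum fun j _ => (hf i j).mul (hf k j).star

theorem Matrix.eq_of_hasDerivAt_apply_zero {E m n : Type*} [NormedAddCommGroup E]
    [NormedSpace ℝ E] {f : ℝ → Matrix m n E} {a b : ℝ}
    (hf : ∀ x ∈ Icc a b, ∀ i j, HasDerivAt (fun t => f t i j) 0 x) :
    ∀ x ∈ Icc a b, f x = f a := fun x hx => by
  ext i j
  exact constant_of_has_deriv_right_zero
    (fun y hy => (hf y hy i j).continuousAt.continuousWithinAt)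
    (fun y hy => (hf y (Ico_subset_Icc_self hy) i j).hasDerivWithinAt) x hx

theorem stmt_14_general (N : ℕ) (a b : ℝ)
    (M : ℝ → Matrix (Fin N ⊕ Fin N) (Fin N ⊕ Fin N) ℂ)
    (ψ : ℝ → Matrix (Fin N) (Fin N ⊕ Fin N) ℂ)
    (hinv : ∀ x ∈ Icc a b, IsUnit (ψ x * (ψ x)ᴴ))
    (hψ : ∀ x ∈ Icc a b, ∀ i j,
      HasDerivAt (fun t => ψ t i j)
        ((-(ψ x * M x *
            ((1 : Matrix (Fin N ⊕ Fin N) (Fin N ⊕ Fin N) ℂ)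
              - (ψ x)ᴴ * (ψ x * (ψ x)ᴴ)⁻¹ * ψ x)) :
            Matrix (Fin N) (Fin N ⊕ Fin N) ℂ) i j) x) :
    ∀ x ∈ Icc a b, ψ x * (ψ x)ᴴ = ψ a * (ψ a)ᴴ := by
  refine Matrix.eq_of_hasDerivAt_apply_zero fun x hx i k => ?_
  have hderiv := hasDerivAt_mul_conjTranspose_apply (hψ x hx) i k
  set D := -(ψ x * M x * (1 - (ψ x)ᴴ * (ψ x * (ψ x)ᴴ)⁻¹ * ψ x))
  have hD : D * (ψ x)ᴴ = 0 := by
    rw [Matrix.neg_mul, Matrix.mul_assoc,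
      one_sub_conjTranspose_mul_inv_mul_mul_conjTranspose (hinv x hx), Matrix.mul_zero, neg_zero]
  have hD' : ψ x * Dᴴ = 0 := by
    rw [← conjTranspose_eq_zero, conjTranspose_mul, conjTranspose_conjTranspose, hD]
  rwa [hD, hD', add_zero, Matrix.zero_apply] at hderiv

/-- In Abramov's orthogonal transfer method, a solution ψ̃ of
ψ̃' + ψ̃ M (I − ψ̃*(ψ̃ψ̃*)⁻¹ψ̃) = 0 with ψ̃ψ̃* invertible has ψ̃(x)ψ̃(x)* constant. -/
theorem stmt_14 (N : ℕ) (hN : 1 ≤ N) (a b : ℝ) (hab : a ≤ b)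
    (M : ℝ → Matrix (Fin N ⊕ Fin N) (Fin N ⊕ Fin N) ℂ)
    (hM : ∀ i j, ContinuousOn (fun t => M t i j) (Icc a b))
    (ψ : ℝ → Matrix (Fin N) (Fin N ⊕ Fin N) ℂ)
    (hinv : ∀ x ∈ Icc a b, IsUnit (ψ x * (ψ x)ᴴ))
    (hψ : ∀ x ∈ Icc a b, ∀ i j,
      HasDerivAt (fun t => ψ t i j)
        ((-(ψ x * M x *
            ((1 : Matrix (Fin N ⊕ Fin N) (Fin N ⊕ Fin N) ℂ)
              - (ψ x)ᴴ * (ψ x * (ψ x)ᴴ)⁻¹ * ψ x)) :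
            Matrix (Fin N) (Fin N ⊕ Fin N) ℂ) i j) x) :
    ∀ x ∈ Icc a b, ψ x * (ψ x)ᴴ = ψ a * (ψ a)ᴴ :=
  stmt_14_general N a b M ψ hinv hψ
end
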